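/- Let h(p) = (2/5)(1-p)(2 + A(p)·p) and g(p) = (1/3)(1-p)(1 + (1-p)^3 + B(p)·p) with A, B as defined above. Then there exists p* ∈ (0,1) such that h(p) > g(p) for all p ∈ (0, p*) and g(p) > h(p) for all p ∈ (p*, 1). -/

import Mathlib

/-!
Clearing denominators, `15 (h p - g p) = (1 - p) Q(p)` for the degree-8 polynomial `Q = crossoverPoly`, with
`Q 0 = 2` and `Q 1 = -6`. Writing `t = 1 - p`, one has
`-Q'(p) = p (9 + 11 t + 8 t² + 30 t⁴ p + 40 t⁶)`, so `Q` is strictly decreasing on `[0, 1]`.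
Its unique root `p* ≈ 0.3399` in `(0, 1)` is the crossover point.
-/

noncomputable def A (p : ℝ) : ℝ := p + 1 - (1-p)^2 * (1 - p*(1-p)) - (1/2) * p * (1-p)

noncomputable def B (p : ℝ) : ℝ :=
  3 + (1+(1-p)^3)*(1-(1-p)^2+p*(1-p)^3) + p*(1+(1-p)^2)

noncomputable def h (p : ℝ) : ℝ := (2/5) * (1-p) * (2 + A p * p)

noncomputable def g (p : ℝ) : ℝ := (1/3) * (1-p) * (1 + (1-p)^3 + B p * p)

open Set

theorem exists_crossing_of_strictAntiOn {α δ : Type*} [ConditionallyCompleteLinearOrder α]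
    [TopologicalSpace α] [OrderTopology α] [DenselyOrdered α] [LinearOrder δ]
    [TopologicalSpace δ] [OrderClosedTopology δ] {a b : α} {f : α → δ} {y : δ}
    (hab : a ≤ b) (hf : ContinuousOn f (Icc a b)) (hanti : StrictAntiOn f (Icc a b))
    (hb : f b < y) (ha : y < f a) :
    ∃ c ∈ Ioo a b, (∀ x ∈ Ioo a c, y < f x) ∧ (∀ x ∈ Ioo c b, f x < y) := by
  obtain ⟨c, hc, rfl⟩ := intermediate_value_Ioo' hab hf ⟨hb, ha⟩
  refine ⟨c, hc, fun x hx => ?_, fun x hx => ?_⟩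
  · exact hanti ⟨hx.1.le, hx.2.le.trans hc.2.le⟩ (Ioo_subset_Icc_self hc) hx.2
  · exact hanti (Ioo_subset_Icc_self hc) ⟨hc.1.le.trans hx.1.le, hx.2.le⟩ hx.1

noncomputable def crossoverPoly (p : ℝ) : ℝ :=
  2 - 34*p^2 + 79*p^3 - 122*p^4 + 124*p^5 - 80*p^6 + 30*p^7 - 5*p^8

theorem h_sub_g_eq (p : ℝ) : h p - g p = (1 - p) * crossoverPoly p / 15 := by
  unfold h g A B crossoverPoly
  ring

theorem continuous_crossoverPoly : Continuous crossoverPoly := by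
  unfold crossoverPoly
  fun_prop

theorem deriv_crossoverPoly (x : ℝ) :
    deriv crossoverPoly x =
      -68*x + 237*x^2 - 488*x^3 + 620*x^4 - 480*x^5 + 210*x^6 - 40*x^7 := by
  unfold crossoverPoly
  simp (disch := fun_prop) only [deriv_fun_sub, deriv_fun_add, deriv_const', deriv_fun_mul,
    zero_mul, deriv_fun_pow, Nat.cast_ofNat, Nat.add_one_sub_one, pow_one, deriv_id'', mul_one,
    zero_add, zero_sub, neg_mul]
  ring

theorem strictAntiOn_crossoverPoly : StrictAntiOn crossoverPoly (Icc 0 1) := by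
  refine strictAntiOn_of_deriv_neg (convex_Icc 0 1) continuous_crossoverPoly.continuousOn
    fun x hx => ?_
  rw [interior_Icc] at hx
  obtain ⟨hx0, hx1⟩ := hx
  have ht : 0 < 1 - x := sub_pos.2 hx1
  set t := 1 - x
  have hderiv : deriv crossoverPoly x =
      -(x * (9 + 11*t + 8*t^2 + 30*t^4*x + 40*t^6)) := by
    rw [deriv_crossoverPoly]
    ring
  rw [hderiv, neg_lt_zero]
  positivity

theorem crossover_exists :
    ∃ pstar : ℝ, 0 < pstar ∧ pstar < 1 ∧
      (∀ p : ℝ, 0 < p → p < pstar → h p > g p) ∧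
      (∀ p : ℝ, pstar < p → p < 1 → g p > h p) := by
  obtain ⟨c, ⟨hc0, hc1⟩, hpos, hneg⟩ :=
    exists_crossing_of_strictAntiOn (y := 0) zero_le_one continuous_crossoverPoly.continuousOn
      strictAntiOn_crossoverPoly (by norm_num [crossoverPoly]) (by norm_num [crossoverPoly])
  refine ⟨c, hc0, hc1, fun p hp0 hpc => ?_, fun p hcp hp1 => ?_⟩
  · rw [gt_iff_lt, ← sub_pos, h_sub_g_eq]
    exact div_pos (mul_pos (sub_pos.2 (hpc.trans hc1)) (hpos p ⟨hp0, hpc⟩)) (by norm_num)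
  · rw [gt_iff_lt, ← sub_neg, h_sub_g_eq]
    exact div_neg_of_neg_of_pos (mul_neg_of_pos_of_neg (sub_pos.2 hp1) (hneg p ⟨hcp, hp1⟩))
      (by norm_num)
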